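/- For any h ∈ ℝ^k and any nonzero integer vector a ∈ ℤ^k, the computation rate satisfies R(h,a) ≤ (1/2)·log(1 + P·maxᵢ hᵢ²). -/

import Mathlib

open Real Finset

/-- Weighted Cauchy–Schwarz. -/
lemma wcs12 {k : ℕ} (w f b : Fin k → ℝ) (hw : ∀ i, 0 < w i) :
    (∑ i, f i * b i)^2 ≤ (∑ i, w i * (f i)^2) * (∑ i, (b i)^2 / w i) := by
  have H := Finset.sum_mul_sq_le_sq_mul_sq Finset.univ
    (fun i => Real.sqrt (w i) * f i) (fun i => b i / Real.sqrt (w i))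
  have h1 : ∀ i : Fin k, Real.sqrt (w i) * f i * (b i / Real.sqrt (w i)) = f i * b i := by
    intro i
    have : Real.sqrt (w i) ≠ 0 := (Real.sqrt_pos.mpr (hw i)).ne'
    field_simp
  have h2 : ∀ i : Fin k, (Real.sqrt (w i) * f i)^2 = w i * (f i)^2 := by
    intro i
    rw [mul_pow, Real.sq_sqrt (hw i).le]
  have h3 : ∀ i : Fin k, (b i / Real.sqrt (w i))^2 = (b i)^2 / w i := by
    intro i
    rw [div_pow, Real.sq_sqrt (hw i).le]
  simp only [h1, h2, h3] at H
  exact H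

/-- Compute-and-forward computation rate with integer coefficient vector. -/
noncomputable def cfRateZ {k : ℕ} (P : ℝ) (h : Fin k → ℝ) (a : Fin k → ℤ) : ℝ :=
  (1/2) * max (Real.log ((∑ i, ((a i : ℝ))^2 -
    P * (∑ i, h i * (a i : ℝ))^2 / (1 + P * ∑ i, (h i)^2))⁻¹)) 0

/-- universal upper bound on the computation rate:
`R(h,a) ≤ (1/2)log(1 + P·maxᵢ hᵢ²)` for any nonzero integer vector `a`. -/
theorem stmt12 {k : ℕ} (hk : 1 ≤ k) (P : ℝ) (hP : 0 < P) (h : Fin k → ℝ)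
    (a : Fin k → ℤ) (ha : a ≠ 0) :
    cfRateZ P h a ≤ (1/2) * Real.log (1 + P *
      (Finset.univ.sup' (Finset.univ_nonempty_iff.mpr
        (Fin.pos_iff_nonempty.mp hk)) fun i => (h i)^2)) := by
  set ne : Finset.univ.Nonempty := Finset.univ_nonempty_iff.mpr (Fin.pos_iff_nonempty.mp hk)
  set M : ℝ := Finset.univ.sup' ne fun i => (h i)^2 with hM
  set A : ℝ := ∑ i, ((a i : ℝ))^2 with hA
  set S : ℝ := ∑ i, h i * (a i : ℝ) with hS
  set Hn : ℝ := ∑ i, (h i)^2 with hHn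
  -- basic positivity
  obtain ⟨j, hj⟩ := ne
  have hM0 : 0 ≤ M := by
    have := Finset.le_sup' (fun i => (h i)^2) hj
    rw [← hM] at this
    exact le_trans (sq_nonneg (h j)) this
  have hHn0 : 0 ≤ Hn := Finset.sum_nonneg fun i _ => sq_nonneg _
  have hden : (0:ℝ) < 1 + P * Hn := by nlinarith
  clear_value M A S Hn
  -- witness of nonzero entry
  obtain ⟨j0, hj0⟩ : ∃ i, a i ≠ 0 := Function.ne_iff.mp ha
  have haj : (1:ℝ) ≤ ((a j0 : ℝ))^2 := by
    have h1 : (1:ℝ) ≤ |((a j0 : ℝ))| := by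
      rw [← Int.cast_abs]
      exact_mod_cast Int.one_le_abs hj0
    nlinarith [sq_abs ((a j0 : ℝ))]
  have hxM : (h j0)^2 ≤ M := by
    have := Finset.le_sup' (fun i => (h i)^2) (Finset.mem_univ j0)
    rw [← hM] at this
    exact this
  -- key inequality: Q ≥ 1/(1+P*M)
  have key : 1 / (1 + P * M) ≤ A - P * S^2 / (1 + P * Hn) := by
    have hAa : ((a j0 : ℝ))^2 ≤ A := by
      rw [hA]
      exact Finset.single_le_sum (f := fun i => ((a i : ℝ))^2) (fun i _ => sq_nonneg _) (Finset.mem_univ j0)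
    by_cases hz : h j0 = 0
    · -- easy case: h j0 = 0
      set g : Fin k → ℝ := fun i => if i = j0 then 0 else (a i : ℝ) with hg
      have e1 : ∑ i, h i * g i = S := by
        rw [hS]
        apply Finset.sum_congr rfl
        intro i _
        by_cases hij : i = j0
        · subst hij; simp [hg, hz]
        · simp [hg, hij]
      have e2 : ∑ i, (g i)^2 = A - ((a j0 : ℝ))^2 := by
        have hd := Finset.sum_eq_single_of_mem (f := fun i => (g i)^2 - ((a i : ℝ))^2)
          (s := Finset.univ) j0 (Finset.mem_univ j0) (fun i _ hij => by simp [hg, hij])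
        simp only [hg, if_pos rfl] at hd
        rw [Finset.sum_sub_distrib, ← hA] at hd
        have hz2 : ((0:ℝ))^2 - ((a j0 : ℝ))^2 = -((a j0 : ℝ))^2 := by ring
        rw [hz2] at hd
        linarith
      have CS0 := Finset.sum_mul_sq_le_sq_mul_sq Finset.univ h g
      rw [e1, e2, ← hHn] at CS0
      have hfrac : P * S^2 / (1 + P * Hn) ≤ A - ((a j0 : ℝ))^2 := by
        rw [div_le_iff₀ hden]
        nlinarith [CS0, sq_nonneg S]
      have hone : 1 / (1 + P * M) ≤ 1 := by
        rw [div_le_one (by nlinarith)]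
        nlinarith
      linarith
    · -- main case: h j0 ≠ 0
      set x : ℝ := (h j0)^2 with hx
      have hx0 : 0 < x := by rw [hx]; positivity
      clear_value x
      set w : Fin k → ℝ := fun i => if i = j0 then 1 + 1/(P*x) else 1 with hw
      have hwpos : ∀ i, 0 < w i := by
        intro i
        by_cases hij : i = j0
        · simp only [hw, hij, if_pos]; positivity
        · simp [hw, hij]
      have CS : S^2 ≤ (∑ i, w i * (h i)^2) * (∑ i, ((a i : ℝ))^2 / w i) := by
        have := wcs12 w h (fun i => (a i : ℝ)) hwpos
        rw [← hS] at this
        exact this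
      have e1 : ∑ i, w i * (h i)^2 = Hn + 1/P := by
        have hd := Finset.sum_eq_single_of_mem (f := fun i => w i * (h i)^2 - (h i)^2)
          (s := Finset.univ) j0 (Finset.mem_univ j0) (fun i _ hij => by simp [hw, hij])
        simp only [hw, if_pos rfl] at hd
        rw [Finset.sum_sub_distrib, ← hHn] at hd
        have heq : (1 + 1/(P*x)) * (h j0)^2 - (h j0)^2 = 1/P := by
          rw [← hx]; field_simp; ring
        rw [heq] at hd
        linarith
      have e2 : ∑ i, ((a i : ℝ))^2 / w i = A - ((a j0 : ℝ))^2 + ((a j0 : ℝ))^2 / (1 + 1/(P*x)) := by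
        have hd := Finset.sum_eq_single_of_mem (f := fun i => ((a i : ℝ))^2 / w i - ((a i : ℝ))^2)
          (s := Finset.univ) j0 (Finset.mem_univ j0) (fun i _ hij => by simp [hw, hij])
        simp only [hw, if_pos rfl] at hd
        rw [Finset.sum_sub_distrib, ← hA] at hd
        linarith
      rw [e1, e2] at CS
      set T : ℝ := A - ((a j0 : ℝ))^2 + ((a j0 : ℝ))^2 / (1 + 1/(P*x)) with hT
      clear_value T
      have hTQ : P * S^2 / (1 + P * Hn) ≤ T := by
        rw [div_le_iff₀ hden]
        have hmul := mul_le_mul_of_nonneg_left CS hP.le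
        have hP1 : P * ((Hn + 1/P) * T) = T * (1 + P * Hn) := by field_simp; ring
        linarith [hP1 ▸ hmul]
      have hAT : A - T = ((a j0 : ℝ))^2 / (1 + P * x) := by
        have h1 : (1:ℝ) + 1/(P*x) ≠ 0 := by positivity
        rw [hT]
        field_simp
        ring
      have hd1 : (0:ℝ) < 1 + P * x := by
        have := mul_pos hP hx0
        linarith
      have hd2 : 1 + P * x ≤ 1 + P * M := by
        have := mul_le_mul_of_nonneg_left hxM hP.le
        linarith
      have hfin : 1 / (1 + P * M) ≤ ((a j0 : ℝ))^2 / (1 + P * x) :=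
        div_le_div₀ (by positivity) haj hd1 hd2
      linarith
  -- conclude
  have hMden : (0:ℝ) < 1 + P * M := by nlinarith
  have hQpos : 0 < A - P * S^2 / (1 + P * Hn) := lt_of_lt_of_le (by positivity) key
  have hlog0 : (0:ℝ) ≤ Real.log (1 + P * M) := Real.log_nonneg (by nlinarith)
  have hloginv : Real.log ((A - P * S^2 / (1 + P * Hn))⁻¹) ≤ Real.log (1 + P * M) := by
    apply Real.log_le_log (by positivity)
    calc (A - P * S^2 / (1 + P * Hn))⁻¹ ≤ (1 / (1 + P * M))⁻¹ :=
          inv_anti₀ (by positivity) key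
      _ = 1 + P * M := by rw [one_div, inv_inv]
  unfold cfRateZ
  rw [← hA, ← hS, ← hHn]
  have := max_le hloginv hlog0
  linarith
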